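/- arXiv:1102.5578 — 8 statements merged into one kernel-verified Lean document; each statement's English description precedes it below -/
import Mathlib

section
/- Let G be a locally finite group. For a finite subset K of G, define the equivalence relation E_K on G by a E_K b iff aK = bK (equality of left translates of K as sets). Let G⊕ be the group of permutations f of G such that for some finite K ⊆ G, every a ∈ G satisfies a E_K f(a). Then the map sending b ∈ G to right translation f_b (defined by f_b(x) = x·b) is an injective group homomorphism from G into G⊕ (with composition read as f_{b₁}·f_{b₂} = f_{b₂} ∘ f_{b₁}). -/
/-!
Take `K` to be the cyclic subgroup generated by `b`, which is finite by local finiteness.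
Since `b ∈ K`, we have `b K = K`, hence `a K = a b K` for every `a`.
-/

universe u

/-- A group is locally finite if every finitely generated subgroup is finite. -/
def IsLocallyFiniteGroup (G : Type u) [Group G] : Prop :=
  ∀ s : Finset G, (Subgroup.closure (s : Set G) : Set G).Finite

open Pointwise

variable {G : Type*} [Group G]

theorem Subgroup.image_mul_left_eq_of_mem (H : Subgroup G) (a : G) {b : G} (hb : b ∈ H) :
    (fun k => a * k) '' (H : Set G) = (fun k => a * b * k) '' (H : Set G) := by
  simp only [← smul_eq_mul, Set.image_smul]
  rw [smul_assoc, smul_coe_set hb]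

theorem Subgroup.exists_finset_image_mul_left_eq (H : Subgroup G) (hH : (H : Set G).Finite)
    {b : G} (hb : b ∈ H) :
    ∃ K : Finset G, ∀ a : G,
      (fun k => a * k) '' (K : Set G) = (fun k => a * b * k) '' (K : Set G) :=
  ⟨hH.toFinset, fun a => by simpa using H.image_mul_left_eq_of_mem a hb⟩

theorem Equiv.mulRight_injective : Function.Injective (Equiv.mulRight : G → Equiv.Perm G) :=
  fun b₁ b₂ h => by simpa using Equiv.congr_fun h 1

/-- For a locally finite group `G`, each right translation `f_b = Equiv.mulRight b`
(`f_b x = x * b`) belongs to `G⊕`, i.e. for some finite `K ⊆ G` we have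
`a K = f_b(a) K` for all `a`; moreover `b ↦ f_b` is injective and satisfies
`f_{b₁ b₂} = f_{b₂} ∘ f_{b₁}` (a group homomorphism into `G⊕` with opposite
composition). -/
theorem stmt0 {G : Type u} [Group G] (hlf : IsLocallyFiniteGroup G) :
    (∀ b : G, ∃ K : Finset G, ∀ a : G,
        (fun k => a * k) '' (K : Set G)
          = (fun k => (Equiv.mulRight b a) * k) '' (K : Set G)) ∧
    Function.Injective (fun b : G => Equiv.mulRight b) ∧
    (∀ b₁ b₂ : G,
        Equiv.mulRight (b₁ * b₂) = Equiv.mulRight b₂ * Equiv.mulRight b₁) := by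
  refine ⟨fun b => ?_, Equiv.mulRight_injective, Equiv.mulRight_mul⟩
  have hfin : (Subgroup.closure ({b} : Set G) : Set G).Finite := by
    simpa using hlf {b}
  exact (Subgroup.closure {b}).exists_finset_image_mul_left_eq hfin
    (Subgroup.mem_closure_singleton_self b)
end

section
/- Every locally finite group G embeds into a locally finite group H such that for all finite groups K ⊆ L and every embedding f : K → G, there is an embedding g : L → H with g restricted to K equal to (the inclusion of G into H composed with) f. -/
universe u

/-!
Let `H` be the group of permutations of `G × ℕ` that, for some finite subgroup `F ≤ G` and some
`d > 0`, preserve every block `xF × [kd, (k+1)d)`. These partitions form a directed family, and the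
stabilizer of one of them embeds into `I → Perm M` with `M` finite. A power of a finite group is
locally finite, since a finitely generated subgroup factors through the finite set of patterns
`i ↦ (σ i)_{σ ∈ s}`; hence `H` is locally finite. `G` sits in `H` by right translations.

Given `K ≤ L` finite and `f : K ↪ G`, put `N = f(K)` and `m = [L : K]`. Every block
`xN × [km, (k+1)m)` is in `K`-equivariant bijection with `N × L/K ≃ K × L/K ≃ L`, so `L` acts on
each block by right translation, extending the action of `f(K)`.
-/

open Function Equiv

namespace IsLocallyFiniteGroup

variable {G H : Type*} [Group G] [Group H]

theorem closure_finite (hG : IsLocallyFiniteGroup G) {s : Set G} (hs : s.Finite) :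
    (Subgroup.closure s : Set G).Finite := by
  simpa using hG hs.toFinset

theorem of_injective (hH : IsLocallyFiniteGroup H) (φ : G →* H) (hφ : Injective φ) :
    IsLocallyFiniteGroup G := fun s =>
  Set.Finite.of_finite_image (by
    rw [← Subgroup.coe_map, MonoidHom.map_closure]
    exact hH.closure_finite (s.finite_toSet.image φ)) hφ.injOn

end IsLocallyFiniteGroup

theorem Subgroup.isLocallyFiniteGroup_iff {G : Type*} [Group G] (S : Subgroup G) :
    IsLocallyFiniteGroup S ↔
      ∀ s : Set G, s.Finite → s ⊆ S → (closure s : Set G).Finite := by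
  refine ⟨fun hS s hs hsS => ?_, fun h t => ?_⟩
  · rw [← Set.image_preimage_eq_of_subset (s := s) (f := S.subtype) (by simpa using hsS),
      ← MonoidHom.map_closure, coe_map]
    exact (hS.closure_finite (hs.preimage S.subtype_injective.injOn)).image _
  · refine Set.Finite.of_finite_image ?_ S.subtype_injective.injOn
    rw [← coe_map, MonoidHom.map_closure]
    exact h _ (t.finite_toSet.image _) (by rintro _ ⟨x, -, rfl⟩; exact x.2)

theorem isLocallyFiniteGroup_iSup_of_directed {G ι : Type*} [Group G] [Nonempty ι]
    {S : ι → Subgroup G} (hdir : Directed (· ≤ ·) S) (hS : ∀ i, IsLocallyFiniteGroup (S i)) :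
    IsLocallyFiniteGroup ↥(⨆ i, S i) := by
  refine (Subgroup.isLocallyFiniteGroup_iff _).mpr fun s hs hsS => ?_
  rw [Subgroup.coe_iSup_of_directed hdir] at hsS
  lift s to Finset G using hs
  obtain ⟨i, hi⟩ :=
    (hdir.mono_comp _ fun _ _ h => h).exists_mem_subset_of_finset_subset_biUnion hsS
  exact ((S i).isLocallyFiniteGroup_iff.mp (hS i)) _ s.finite_toSet hi

theorem isLocallyFiniteGroup_pi (I F : Type*) [Group F] [Finite F] :
    IsLocallyFiniteGroup (I → F) := by
  intro s
  let pattern : I → (s → F) := fun i σ => (σ : I → F) i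
  let pullback : ((s → F) → F) →* (I → F) :=
    { toFun h := h ∘ pattern, map_one' := rfl, map_mul' _ _ := rfl }
  have : Subgroup.closure (s : Set (I → F)) ≤ pullback.range :=
    (Subgroup.closure_le _).mpr fun σ hσ => ⟨fun v => v ⟨σ, hσ⟩, rfl⟩
  exact (Set.finite_range pullback).subset this

section FiberStabilizer

variable {X I : Type*}

def fiberStabilizer (π : X → I) : Subgroup (Perm X) where
  carrier := {σ | ∀ x, π (σ x) = π x}
  one_mem' _ := rfl
  mul_mem' hσ hτ x := (hσ _).trans (hτ x)
  inv_mem' {σ} hσ x := by simpa using (hσ (σ⁻¹ x)).symm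

theorem fiberStabilizer_mono {J : Type*} {π : X → I} {π' : X → J}
    (h : ∀ x y, π x = π y → π' x = π' y) : fiberStabilizer π ≤ fiberStabilizer π' :=
  fun _ hσ x => h _ _ (hσ x)

def fiberStabilizer.toPermFibers (π : X → I) : fiberStabilizer π →* ∀ i, Perm {x // π x = i} where
  toFun σ _ := (σ : Perm X).subtypePerm fun x => by rw [σ.2 x]
  map_one' := rfl
  map_mul' _ _ := rfl

theorem fiberStabilizer.toPermFibers_injective (π : X → I) :
    Injective (toPermFibers π) := fun _ _ h => Subtype.ext <| Perm.ext fun x =>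
  congrArg (fun g => (g (π x) ⟨x, rfl⟩ : X)) h

end FiberStabilizer

theorem isLocallyFiniteGroup_fiberStabilizer {X I M : Type*} [Finite M] (Γ : X ≃ I × M) :
    IsLocallyFiniteGroup (fiberStabilizer fun x => (Γ x).1) := by
  let fiberEquiv (i : I) : {x // (Γ x).1 = i} ≃ M :=
    { toFun x := (Γ x).2
      invFun m := ⟨Γ.symm (i, m), by simp⟩
      left_inv := fun ⟨x, hx⟩ => Subtype.ext <| Γ.symm_apply_eq.mpr (by subst hx; rfl)
      right_inv m := by simp }
  let e := MulEquiv.piCongrRight fun i => (fiberEquiv i).permCongrHom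
  exact (isLocallyFiniteGroup_pi I (Perm M)).of_injective
    (e.toMonoidHom.comp (fiberStabilizer.toPermFibers _))
    (e.injective.comp (fiberStabilizer.toPermFibers_injective _))

namespace QuotientGroup

variable {G : Type*} [Group G]

noncomputable def equivQuotientProd (S : Subgroup G) : G ≃ (G ⧸ S) × S where
  toFun x := (x, ⟨(x : G ⧸ S).out⁻¹ * x, leftRel_apply.mp (Quotient.exact (out_eq' (x : G ⧸ S)))⟩)
  invFun p := p.1.out * p.2
  left_inv x := by simp
  right_inv := fun ⟨q, s⟩ => by
    have hq : ((q.out * s : G) : G ⧸ S) = q := by rw [mk_mul_of_mem _ s.2, out_eq']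
    ext <;> simp [hq]

@[simp] theorem equivQuotientProd_symm_apply (S : Subgroup G) (q : G ⧸ S) (s : S) :
    (equivQuotientProd S).symm (q, s) = q.out * s := rfl

theorem equivQuotientProd_mul (S : Subgroup G) (x : G) (s : S) :
    equivQuotientProd S (x * s) = ((equivQuotientProd S x).1, (equivQuotientProd S x).2 * s) := by
  have hx : ((x * s : G) : G ⧸ S) = x := mk_mul_of_mem x s.2
  ext <;> simp [equivQuotientProd, hx, mul_assoc]

end QuotientGroup

section Blocks

variable {G : Type*} [Group G]

def blockMap (F : Subgroup G) (d : ℕ) (p : G × ℕ) : (G ⧸ F) × ℕ :=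
  (p.1, p.2 / d)

theorem blockMap_eq_of_le {F F' : Subgroup G} (hF : F ≤ F') {d d' : ℕ} (hd : d ∣ d')
    {p q : G × ℕ} (h : blockMap F d p = blockMap F d q) : blockMap F' d' p = blockMap F' d' q := by
  obtain ⟨h₁, h₂⟩ := Prod.ext_iff.mp h
  obtain ⟨e, rfl⟩ := hd
  refine Prod.ext (QuotientGroup.eq.mpr (hF (QuotientGroup.eq.mp h₁))) ?_
  simp only [blockMap, ← Nat.div_div_eq_div_mul] at h₂ ⊢
  rw [h₂]

noncomputable def blockEquiv (F : Subgroup G) (d : ℕ) [NeZero d] :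
    G × ℕ ≃ ((G ⧸ F) × ℕ) × (F × Fin d) :=
  ((QuotientGroup.equivQuotientProd F).prodCongr (Nat.divModEquiv d)).trans
    (prodProdProdComm _ _ _ _)

-- `d : ℕ+`, since `n / 0 = 0` would make the blocks infinite.
def blockPermGroup (G : Type*) [Group G] : Subgroup (Perm (G × ℕ)) :=
  ⨆ b : {F : Subgroup G // (F : Set G).Finite} × ℕ+, fiberStabilizer (blockMap b.1.1 b.2)

theorem fiberStabilizer_le_blockPermGroup {F : Subgroup G} (hF : (F : Set G).Finite) (d : ℕ+) :
    fiberStabilizer (blockMap F d) ≤ blockPermGroup G :=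
  le_iSup (fun b : {F : Subgroup G // (F : Set G).Finite} × ℕ+ =>
    fiberStabilizer (blockMap b.1.1 b.2)) (⟨F, hF⟩, d)

theorem isLocallyFiniteGroup_blockPermGroup (hG : IsLocallyFiniteGroup G) :
    IsLocallyFiniteGroup (blockPermGroup G) := by
  have : Nonempty ({F : Subgroup G // (F : Set G).Finite} × ℕ+) := ⟨(⟨⊥, by simp⟩, 1)⟩
  refine isLocallyFiniteGroup_iSup_of_directed ?_ fun ⟨⟨F, hF⟩, d⟩ => ?_
  · rintro ⟨⟨F, hF⟩, d⟩ ⟨⟨F', hF'⟩, d'⟩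
    have hsup : ((F ⊔ F' : Subgroup G) : Set G).Finite := by
      rw [Subgroup.sup_eq_closure]
      exact hG.closure_finite (hF.union hF')
    exact ⟨(⟨F ⊔ F', hsup⟩, d * d'),
      fiberStabilizer_mono fun _ _ => blockMap_eq_of_le le_sup_left (dvd_mul_right _ _),
      fiberStabilizer_mono fun _ _ => blockMap_eq_of_le le_sup_right (dvd_mul_left _ _)⟩
  · have := hF.to_subtype
    exact isLocallyFiniteGroup_fiberStabilizer (blockEquiv F d)

end Blocks

section RightTranslation

variable {X Y L : Type*} [Group L] (Ξ : X ≃ Y × L)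

def rightTranslation : L →* Perm X where
  toFun ℓ := (Ξ.trans ((Equiv.refl Y).prodCongr (Equiv.mulRight ℓ⁻¹))).trans Ξ.symm
  map_one' := by ext; simp
  map_mul' a b := by ext; simp [Prod.map, mul_assoc]

theorem rightTranslation_apply (ℓ : L) (x : X) :
    rightTranslation Ξ ℓ x = Ξ.symm ((Ξ x).1, (Ξ x).2 * ℓ⁻¹) := rfl

@[simp] theorem apply_rightTranslation (ℓ : L) (x : X) :
    Ξ (rightTranslation Ξ ℓ x) = ((Ξ x).1, (Ξ x).2 * ℓ⁻¹) := by
  simp [rightTranslation_apply]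

theorem rightTranslation_injective [Nonempty Y] : Injective (rightTranslation Ξ) := by
  refine (injective_iff_map_eq_one _).mpr fun ℓ hℓ => ?_
  obtain ⟨y⟩ := ‹Nonempty Y›
  have := congrArg Ξ (Perm.ext_iff.mp hℓ (Ξ.symm (y, 1)))
  simpa using this

theorem rightTranslation_mem_fiberStabilizer (ℓ : L) :
    rightTranslation Ξ ℓ ∈ fiberStabilizer fun x => (Ξ x).1 := fun x => by simp

theorem rightTranslation_eq_of_forall_apply {ℓ : L} {σ : Perm X}
    (h : ∀ x, Ξ (σ x) = ((Ξ x).1, (Ξ x).2 * ℓ⁻¹)) : rightTranslation Ξ ℓ = σ :=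
  Perm.ext fun x => Ξ.injective (by rw [apply_rightTranslation, h])

@[simp] theorem rightTranslation_prodComm_apply {G : Type*} [Group G] (g : G) (x : G) (n : ℕ) :
    rightTranslation (prodComm G ℕ) g (x, n) = (x * g⁻¹, n) := rfl

end RightTranslation

theorem rightTranslation_prodComm_mem_blockPermGroup {G : Type*} [Group G]
    (hG : IsLocallyFiniteGroup G) (g : G) :
    rightTranslation (prodComm G ℕ) g ∈ blockPermGroup G := by
  refine fiberStabilizer_le_blockPermGroup (hG.closure_finite (Set.finite_singleton g)) 1
    fun ⟨x, n⟩ => Prod.ext ?_ rfl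
  exact QuotientGroup.mk_mul_of_mem x (inv_mem (Subgroup.subset_closure rfl))

theorem exists_equiv_blocks_prod_intertwining {G K L : Type*} [Group G] [Group K] [Group L]
    [Finite L] {f : K →* G} (hf : Injective f) {i : K →* L} (hi : Injective i) :
    ∃ (d : ℕ+) (Ξ : G × ℕ ≃ ((G ⧸ f.range) × ℕ) × L), (∀ p, (Ξ p).1 = blockMap f.range d p) ∧
      ∀ k x n, Ξ (x * f k, n) = ((Ξ (x, n)).1, (Ξ (x, n)).2 * i k) := by
  let d : ℕ+ := ⟨Nat.card (L ⧸ i.range), Nat.card_pos⟩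
  let φ : f.range ≃* i.range := (MonoidHom.ofInjective hf).symm.trans (MonoidHom.ofInjective hi)
  have hφ (k : K) : (φ ⟨f k, k, rfl⟩ : L) = i k := by
    have : (MonoidHom.ofInjective hf).symm ⟨f k, k, rfl⟩ = k :=
      (MulEquiv.symm_apply_eq _).mpr (Subtype.ext (MonoidHom.ofInjective_apply hf).symm)
    simp [φ, this, MonoidHom.ofInjective_apply]
  let e : f.range × Fin d ≃ L :=
    ((prodComm _ _).trans ((Finite.equivFin (L ⧸ i.range)).symm.prodCongr φ.toEquiv)).trans
      (QuotientGroup.equivQuotientProd i.range).symm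
  refine ⟨d, (blockEquiv f.range d).trans ((Equiv.refl _).prodCongr e), fun _ => rfl,
    fun k x n => ?_⟩
  have he (a y : f.range) (j : Fin d) : e (a * y, j) = e (a, j) * φ y := by
    show (QuotientGroup.equivQuotientProd i.range).symm ((Finite.equivFin _).symm j, φ (a * y)) =
      (QuotientGroup.equivQuotientProd i.range).symm ((Finite.equivFin _).symm j, φ a) * φ y
    simp [mul_assoc]
  have hx := QuotientGroup.equivQuotientProd_mul f.range x ⟨f k, k, rfl⟩
  simp only [blockEquiv, Equiv.trans_apply, Equiv.prodCongr_apply, Prod.map, Equiv.refl_apply,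
    prodProdProdComm_apply]
  rw [hx, he, hφ]

/-- Every locally finite group `G` embeds into a locally finite group `H` such that
for all finite groups `K ⊆ L` and every embedding `f : K → G`, there is an embedding
`g : L → H` extending (the composition with the inclusion `G → H` of) `f`. -/
theorem stmt1 {G : Type u} [Group G] (hlf : IsLocallyFiniteGroup G) :
    ∃ (H : GrpCat.{u}), IsLocallyFiniteGroup H ∧
      ∃ emb : G →* H, Function.Injective emb ∧
        ∀ (K L : Type) [Group K] [Group L] [Finite L] (i : K →* L),
          Function.Injective i →
          ∀ f : K →* G, Function.Injective f →
            ∃ g : L →* H, Function.Injective g ∧ ∀ x, g (i x) = emb (f x) := by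
  refine ⟨GrpCat.of (blockPermGroup G), isLocallyFiniteGroup_blockPermGroup hlf,
    (rightTranslation (prodComm G ℕ)).codRestrict _
      (rightTranslation_prodComm_mem_blockPermGroup hlf),
    fun _ _ h => rightTranslation_injective _ (congrArg Subtype.val h), ?_⟩
  intro K L _ _ _ i hi f hf
  obtain ⟨d, Ξ, hΞ, hequiv⟩ := exists_equiv_blocks_prod_intertwining hf hi
  have hmem (ℓ : L) : rightTranslation Ξ ℓ ∈ blockPermGroup G := by
    refine fiberStabilizer_le_blockPermGroup (F := f.range) ?_ d ?_
    · have : Finite K := Finite.of_injective i hi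
      simpa using Set.finite_range f
    · simpa only [← funext hΞ] using rightTranslation_mem_fiberStabilizer Ξ ℓ
  refine ⟨(rightTranslation Ξ).codRestrict _ hmem,
    fun _ _ h => rightTranslation_injective _ (congrArg Subtype.val h), fun k => ?_⟩
  refine Subtype.ext (rightTranslation_eq_of_forall_apply Ξ fun ⟨x, n⟩ => ?_)
  simpa using hequiv k⁻¹ x n
end

section
/- Let G₀ ⊆ G₁ and G₀ ⊆ G₂ be inclusions of groups, and for ℓ = 1,2 let I_ℓ ⊆ G_ℓ be a set of representatives of the left cosets g·G₀ in G_ℓ with e ∈ I₁ ∩ I₂. Let U be the set of triples (g₀,g₁,g₂) with g₀ ∈ G₀, g₁ ∈ I₁, g₂ ∈ I₂. For g ∈ G₁ define j₁(g) : U → U by j₁(g)(g₀,g₁,g₂) = (g₀',g₁',g₂) where g₁'·g₀' = g₁·g₀·g with g₁' ∈ I₁, g₀' ∈ G₀. Then j₁(g) is a well-defined permutation of U, and j₁ : G₁ → Perm(U) is an injective group homomorphism when Perm(U) is given the opposite composition (j₁(fh) = j₁(h) ∘ j₁(f)). -/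
/-!
Writing `x = r * ι h` with `r ∈ I₁`, `h ∈ G₀` identifies `G₀ × I₁` with `G₁`, hence the triples
with `G₁ × I₂`. Under this identification `j₁ g` is right multiplication by `g` on the first
factor, so it is a permutation, `j₁ (f * h) = j₁ h * j₁ f`, and `g` can be read off from the
image of any single triple.
-/

universe u

open Function

section Transversal

variable {H G : Type*} [Group H] [Group G] {ι : H →* G} {I : Set G}

theorem bijective_mul_of_existsUnique_rep (hι : Injective ι)
    (hrep : ∀ g : G, ∃! r, r ∈ I ∧ ∃ h : H, g = r * ι h) :
    Bijective (fun p : H × I => (p.2 : G) * ι p.1) := by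
  refine ⟨fun ⟨h, r, hr⟩ ⟨h', r', hr'⟩ heq => ?_, fun g => ?_⟩
  · obtain rfl : r = r' := (hrep _).unique ⟨hr, h, rfl⟩ ⟨hr', h', heq⟩
    obtain rfl : h = h' := hι (mul_left_cancel heq)
    rfl
  · obtain ⟨r, ⟨hr, h, rfl⟩, -⟩ := hrep g
    exact ⟨(h, ⟨r, hr⟩), rfl⟩

noncomputable def cosetTripleEquiv {K : Type*} (J : Set K) (hι : Injective ι)
    (hrep : ∀ g : G, ∃! r, r ∈ I ∧ ∃ h : H, g = r * ι h) :
    {p : H × G × K // p.2.1 ∈ I ∧ p.2.2 ∈ J} ≃ G × J :=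
  let e := Equiv.ofBijective _ (bijective_mul_of_existsUnique_rep hι hrep)
  { toFun := fun p => (p.1.2.1 * ι p.1.1, ⟨p.1.2.2, p.2.2⟩)
    invFun := fun x => ⟨((e.symm x.1).1, (e.symm x.1).2, x.2), (e.symm x.1).2.2, x.2.2⟩
    left_inv := fun ⟨(h, r, k), hr, hk⟩ => by
      have := e.symm_apply_apply (h, ⟨r, hr⟩)
      simp_all [e]
    right_inv := fun x => Prod.ext (e.apply_symm_apply x.1) rfl }

end Transversal

theorem stmt3_general {G₀ G₁ G₂ : Type u} [Group G₀] [Group G₁] [Group G₂]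
    (ι₁ : G₀ →* G₁)
    (hι₁ : Function.Injective ι₁)
    (I₁ : Set G₁) (I₂ : Set G₂)
    (hone₂ : (1 : G₂) ∈ I₂)
    (hrep₁ : ∀ g : G₁, ∃! r, r ∈ I₁ ∧ ∃ h : G₀, g = r * ι₁ h) :
    ∃ j₁ : G₁ → Equiv.Perm {p : G₀ × G₁ × G₂ // p.2.1 ∈ I₁ ∧ p.2.2 ∈ I₂},
      (∀ (g : G₁) (u : {p : G₀ × G₁ × G₂ // p.2.1 ∈ I₁ ∧ p.2.2 ∈ I₂}),
          ((j₁ g u).1.2.2 = u.1.2.2) ∧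
          ((j₁ g u).1.2.1 * ι₁ ((j₁ g u).1.1) = u.1.2.1 * ι₁ u.1.1 * g)) ∧
      Function.Injective j₁ ∧
      (∀ f h : G₁, j₁ (f * h) = j₁ h * j₁ f) := by
  set e := cosetTripleEquiv I₂ hι₁ hrep₁
  refine ⟨fun g => e.symm.permCongr ((Equiv.mulRight g).prodCongr (Equiv.refl _)),
    fun g u => ⟨rfl, congrArg Prod.fst (e.apply_symm_apply _)⟩, fun a b hab => ?_, fun f h => ?_⟩
  · let u₀ := e.symm (1, ⟨1, hone₂⟩)
    have hprod := congrArg (fun u => (e u).1) (Equiv.congr_fun hab u₀)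
    simpa [u₀] using hprod
  · simp only [Equiv.mulRight_mul]
    rw [← Equiv.permCongr_mul]
    rfl

/-- Coset-triple construction: given `G₀ ⊆ G₁`, `G₀ ⊆ G₂` with left coset
representative sets `I₁`, `I₂` containing the identity, and
`U = {(g₀,g₁,g₂) : g₀ ∈ G₀, g₁ ∈ I₁, g₂ ∈ I₂}`, there is a (unique, hence
well-defined) family of permutations `j₁ g` of `U` for `g ∈ G₁` acting by
`(g₀,g₁,g₂) ↦ (g₀',g₁',g₂)` where `g₁' * g₀' = g₁ * g₀ * g`; moreover
`j₁` is injective and `j₁ (f*h) = j₁ h ∘ j₁ f` (an injective homomorphism into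
`Perm U` with the opposite composition). -/
theorem stmt3 {G₀ G₁ G₂ : Type u} [Group G₀] [Group G₁] [Group G₂]
    (ι₁ : G₀ →* G₁) (ι₂ : G₀ →* G₂)
    (hι₁ : Function.Injective ι₁) (hι₂ : Function.Injective ι₂)
    (I₁ : Set G₁) (I₂ : Set G₂)
    (hone₁ : (1 : G₁) ∈ I₁) (hone₂ : (1 : G₂) ∈ I₂)
    (hrep₁ : ∀ g : G₁, ∃! r, r ∈ I₁ ∧ ∃ h : G₀, g = r * ι₁ h)
    (hrep₂ : ∀ g : G₂, ∃! r, r ∈ I₂ ∧ ∃ h : G₀, g = r * ι₂ h) :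
    ∃ j₁ : G₁ → Equiv.Perm {p : G₀ × G₁ × G₂ // p.2.1 ∈ I₁ ∧ p.2.2 ∈ I₂},
      (∀ (g : G₁) (u : {p : G₀ × G₁ × G₂ // p.2.1 ∈ I₁ ∧ p.2.2 ∈ I₂}),
          ((j₁ g u).1.2.2 = u.1.2.2) ∧
          ((j₁ g u).1.2.1 * ι₁ ((j₁ g u).1.1) = u.1.2.1 * ι₁ u.1.1 * g)) ∧
      Function.Injective j₁ ∧
      (∀ f h : G₁, j₁ (f * h) = j₁ h * j₁ f) :=
  stmt3_general ι₁ hι₁ I₁ I₂ hone₂ hrep₁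
end

section
/- In the setting of the coset-triple permutation construction: with U, j₁, j₂ as above (j₂ defined symmetrically using the G₂-coordinate), the restrictions of j₁ and j₂ to G₀ coincide; i.e., for every g ∈ G₀, j₁(g) = j₂(g) as permutations of U. -/
/-!
By uniqueness of the decomposition `r * ι a` with `r` a coset representative, both
`j₁ (ι₁ g)` and `j₂ (ι₂ g)` send `(g₀, g₁, g₂)` to `(g₀ * g, g₁, g₂)`.
-/

universe u

theorem eq_and_eq_of_mul_map_eq_mul_map {G₀ G : Type*} [Group G₀] [Group G] {ι : G₀ →* G}
    (hι : Function.Injective ι) {I : Set G} (hrep : ∀ g : G, ∃! r, r ∈ I ∧ ∃ h : G₀, g = r * ι h)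
    {r r' : G} (hr : r ∈ I) (hr' : r' ∈ I) {a a' : G₀} (h : r * ι a = r' * ι a') :
    r = r' ∧ a = a' := by
  obtain ⟨s, -, hs⟩ := hrep (r * ι a)
  have hrr' : r = r' := (hs r ⟨hr, a, rfl⟩).trans (hs r' ⟨hr', a', h⟩).symm
  subst hrr'
  exact ⟨rfl, hι (mul_left_cancel h)⟩

theorem stmt4_general {G₀ G₁ G₂ : Type u} [Group G₀] [Group G₁] [Group G₂]
    (ι₁ : G₀ →* G₁) (ι₂ : G₀ →* G₂)
    (hι₁ : Function.Injective ι₁) (hι₂ : Function.Injective ι₂)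
    (I₁ : Set G₁) (I₂ : Set G₂)
    (hrep₁ : ∀ g : G₁, ∃! r, r ∈ I₁ ∧ ∃ h : G₀, g = r * ι₁ h)
    (hrep₂ : ∀ g : G₂, ∃! r, r ∈ I₂ ∧ ∃ h : G₀, g = r * ι₂ h)
    (j₁ : G₁ → Equiv.Perm {p : G₀ × G₁ × G₂ // p.2.1 ∈ I₁ ∧ p.2.2 ∈ I₂})
    (j₂ : G₂ → Equiv.Perm {p : G₀ × G₁ × G₂ // p.2.1 ∈ I₁ ∧ p.2.2 ∈ I₂})
    (hj₁ : ∀ (g : G₁) (u : {p : G₀ × G₁ × G₂ // p.2.1 ∈ I₁ ∧ p.2.2 ∈ I₂}),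
        ((j₁ g u).1.2.2 = u.1.2.2) ∧
        ((j₁ g u).1.2.1 * ι₁ ((j₁ g u).1.1) = u.1.2.1 * ι₁ u.1.1 * g))
    (hj₂ : ∀ (g : G₂) (u : {p : G₀ × G₁ × G₂ // p.2.1 ∈ I₁ ∧ p.2.2 ∈ I₂}),
        ((j₂ g u).1.2.1 = u.1.2.1) ∧
        ((j₂ g u).1.2.2 * ι₂ ((j₂ g u).1.1) = u.1.2.2 * ι₂ u.1.1 * g)) :
    ∀ g : G₀, j₁ (ι₁ g) = j₂ (ι₂ g) := by
  intro g
  ext1 u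
  obtain ⟨hfix₁, hmul₁⟩ := hj₁ (ι₁ g) u
  obtain ⟨hfix₂, hmul₂⟩ := hj₂ (ι₂ g) u
  rw [mul_assoc, ← map_mul] at hmul₁ hmul₂
  obtain ⟨hrep₁_eq, hcoord₁⟩ :=
    eq_and_eq_of_mul_map_eq_mul_map hι₁ hrep₁ (j₁ (ι₁ g) u).2.1 u.2.1 hmul₁
  obtain ⟨hrep₂_eq, hcoord₂⟩ :=
    eq_and_eq_of_mul_map_eq_mul_map hι₂ hrep₂ (j₂ (ι₂ g) u).2.2 u.2.2 hmul₂
  exact Subtype.ext <| Prod.ext (hcoord₁.trans hcoord₂.symm) <|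
    Prod.ext (hrep₁_eq.trans hfix₂.symm) (hfix₁.trans hrep₂_eq.symm)

/-- In the coset-triple construction, the canonical actions `j₁` (of `G₁`) and
`j₂` (of `G₂`) on `U` agree on the common subgroup `G₀`: any functions
`j₁`, `j₂` satisfying the defining specifications satisfy
`j₁ (ι₁ g) = j₂ (ι₂ g)` for every `g ∈ G₀`. -/
theorem stmt4 {G₀ G₁ G₂ : Type u} [Group G₀] [Group G₁] [Group G₂]
    (ι₁ : G₀ →* G₁) (ι₂ : G₀ →* G₂)
    (hι₁ : Function.Injective ι₁) (hι₂ : Function.Injective ι₂)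
    (I₁ : Set G₁) (I₂ : Set G₂)
    (hone₁ : (1 : G₁) ∈ I₁) (hone₂ : (1 : G₂) ∈ I₂)
    (hrep₁ : ∀ g : G₁, ∃! r, r ∈ I₁ ∧ ∃ h : G₀, g = r * ι₁ h)
    (hrep₂ : ∀ g : G₂, ∃! r, r ∈ I₂ ∧ ∃ h : G₀, g = r * ι₂ h)
    (j₁ : G₁ → Equiv.Perm {p : G₀ × G₁ × G₂ // p.2.1 ∈ I₁ ∧ p.2.2 ∈ I₂})
    (j₂ : G₂ → Equiv.Perm {p : G₀ × G₁ × G₂ // p.2.1 ∈ I₁ ∧ p.2.2 ∈ I₂})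
    (hj₁ : ∀ (g : G₁) (u : {p : G₀ × G₁ × G₂ // p.2.1 ∈ I₁ ∧ p.2.2 ∈ I₂}),
        ((j₁ g u).1.2.2 = u.1.2.2) ∧
        ((j₁ g u).1.2.1 * ι₁ ((j₁ g u).1.1) = u.1.2.1 * ι₁ u.1.1 * g))
    (hj₂ : ∀ (g : G₂) (u : {p : G₀ × G₁ × G₂ // p.2.1 ∈ I₁ ∧ p.2.2 ∈ I₂}),
        ((j₂ g u).1.2.1 = u.1.2.1) ∧
        ((j₂ g u).1.2.2 * ι₂ ((j₂ g u).1.1) = u.1.2.2 * ι₂ u.1.1 * g)) :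
    ∀ g : G₀, j₁ (ι₁ g) = j₂ (ι₂ g) :=
  stmt4_general ι₁ ι₂ hι₁ hι₂ I₁ I₂ hrep₁ hrep₂ j₁ j₂ hj₁ hj₂
end

section
/- In the coset-triple permutation construction, the images of G₁ and G₂ intersect exactly in the image of G₀: if a₁ ∈ G₁, a₂ ∈ G₂ and j₁(a₁) = j₂(a₂) as permutations of U, then a₁ = a₂ ∈ G₀. In particular j₁(G₁) ∩ j₂(G₂) = j₁(G₀) inside Perm(U). -/
universe u

theorem stmt5_general {G₀ G₁ G₂ : Type u} [Group G₀] [Group G₁] [Group G₂]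
    (ι₁ : G₀ →* G₁) (ι₂ : G₀ →* G₂)
    (I₁ : Set G₁) (I₂ : Set G₂)
    (hone₁ : (1 : G₁) ∈ I₁) (hone₂ : (1 : G₂) ∈ I₂)
    (j₁ : G₁ → Equiv.Perm {p : G₀ × G₁ × G₂ // p.2.1 ∈ I₁ ∧ p.2.2 ∈ I₂})
    (j₂ : G₂ → Equiv.Perm {p : G₀ × G₁ × G₂ // p.2.1 ∈ I₁ ∧ p.2.2 ∈ I₂})
    (hj₁ : ∀ (g : G₁) (u : {p : G₀ × G₁ × G₂ // p.2.1 ∈ I₁ ∧ p.2.2 ∈ I₂}),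
        ((j₁ g u).1.2.2 = u.1.2.2) ∧
        ((j₁ g u).1.2.1 * ι₁ ((j₁ g u).1.1) = u.1.2.1 * ι₁ u.1.1 * g))
    (hj₂ : ∀ (g : G₂) (u : {p : G₀ × G₁ × G₂ // p.2.1 ∈ I₁ ∧ p.2.2 ∈ I₂}),
        ((j₂ g u).1.2.1 = u.1.2.1) ∧
        ((j₂ g u).1.2.2 * ι₂ ((j₂ g u).1.1) = u.1.2.2 * ι₂ u.1.1 * g)) :
    ∀ (a₁ : G₁) (a₂ : G₂), j₁ a₁ = j₂ a₂ →
      ∃ g₀ : G₀, a₁ = ι₁ g₀ ∧ a₂ = ι₂ g₀ := by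
  intro a₁ a₂ h
  -- `j₁ a₁` fixes the third coordinate and `j₂ a₂` the second, so the common image of
  -- the base point `(1, 1, 1)` is some `(g₀, 1, 1)`, and then `a₁ = ι₁ g₀`, `a₂ = ι₂ g₀`.
  let u₀ : {p : G₀ × G₁ × G₂ // p.2.1 ∈ I₁ ∧ p.2.2 ∈ I₂} := ⟨(1, 1, 1), hone₁, hone₂⟩
  obtain ⟨h₁fix, h₁mul⟩ := hj₁ a₁ u₀
  obtain ⟨h₂fix, h₂mul⟩ := hj₂ a₂ u₀
  rw [h] at h₁fix h₁mul
  refine ⟨(j₂ a₂ u₀).1.1, ?_, ?_⟩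
  · simpa [h₂fix, u₀] using h₁mul.symm
  · simpa [h₁fix, u₀] using h₂mul.symm

/-- In the coset-triple construction the images of `G₁` and `G₂` in `Perm U`
intersect exactly in the image of `G₀`: if `j₁ a₁ = j₂ a₂` then `a₁` and `a₂`
are the images under `ι₁`, `ι₂` of a common element `g₀ ∈ G₀`. -/
theorem stmt5 {G₀ G₁ G₂ : Type u} [Group G₀] [Group G₁] [Group G₂]
    (ι₁ : G₀ →* G₁) (ι₂ : G₀ →* G₂)
    (hι₁ : Function.Injective ι₁) (hι₂ : Function.Injective ι₂)
    (I₁ : Set G₁) (I₂ : Set G₂)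
    (hone₁ : (1 : G₁) ∈ I₁) (hone₂ : (1 : G₂) ∈ I₂)
    (hrep₁ : ∀ g : G₁, ∃! r, r ∈ I₁ ∧ ∃ h : G₀, g = r * ι₁ h)
    (hrep₂ : ∀ g : G₂, ∃! r, r ∈ I₂ ∧ ∃ h : G₀, g = r * ι₂ h)
    (j₁ : G₁ → Equiv.Perm {p : G₀ × G₁ × G₂ // p.2.1 ∈ I₁ ∧ p.2.2 ∈ I₂})
    (j₂ : G₂ → Equiv.Perm {p : G₀ × G₁ × G₂ // p.2.1 ∈ I₁ ∧ p.2.2 ∈ I₂})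
    (hj₁ : ∀ (g : G₁) (u : {p : G₀ × G₁ × G₂ // p.2.1 ∈ I₁ ∧ p.2.2 ∈ I₂}),
        ((j₁ g u).1.2.2 = u.1.2.2) ∧
        ((j₁ g u).1.2.1 * ι₁ ((j₁ g u).1.1) = u.1.2.1 * ι₁ u.1.1 * g))
    (hj₂ : ∀ (g : G₂) (u : {p : G₀ × G₁ × G₂ // p.2.1 ∈ I₁ ∧ p.2.2 ∈ I₂}),
        ((j₂ g u).1.2.1 = u.1.2.1) ∧
        ((j₂ g u).1.2.2 * ι₂ ((j₂ g u).1.1) = u.1.2.2 * ι₂ u.1.1 * g)) :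
    ∀ (a₁ : G₁) (a₂ : G₂), j₁ a₁ = j₂ a₂ →
      ∃ g₀ : G₀, a₁ = ι₁ g₀ ∧ a₂ = ι₂ g₀ :=
  stmt5_general ι₁ ι₂ I₁ I₂ hone₁ hone₂ j₁ j₂ hj₁ hj₂
end

section
/- If G₀, G₁, G₂ are finite groups with G₀ ⊆ G₁ and G₀ ⊆ G₂, and G_x ≤ Perm(U) is the subgroup generated by j₁(G₁) ∪ j₂(G₂) in the coset-triple permutation construction, then |G_x| ≤ ((|G₁|·|G₂|/|G₀|)!). In particular G_x is a finite group into which both G₁ and G₂ embed with the embeddings agreeing on G₀. -/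
/-!
The point `(h, r₁, r₂)` of `U` encodes the pair `(r₁ * ι₁ h, r₂ * ι₂ h)`, and `j₁ g` acts on the
first entry by right multiplication. Hence `u ↦ r₁ * ι₁ h` intertwines `j₁` with the right
regular action of `G₁`, which makes `j₁` injective; for `g = ι₁ k` the coset representative
stays put by uniqueness of the decomposition, so `j₁ (ι₁ k)` and `j₂ (ι₂ k)` both send
`(h, r₁, r₂)` to `(h k, r₁, r₂)`. The bound is `|Perm U| = |U|!` with `|U| = |G₀||I₁||I₂|`.
-/

open Function

section CosetDecomposition

variable {G H : Type*} [Group G] [Group H] {ι : H →* G} {I : Set G}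

theorem eq_and_eq_of_mul_eq_mul (hι : Injective ι)
    (hrep : ∀ g : G, ∃! r, r ∈ I ∧ ∃ h : H, g = r * ι h)
    {r r' : G} (hr : r ∈ I) (hr' : r' ∈ I) {h h' : H} (e : r * ι h = r' * ι h') :
    r = r' ∧ h = h' := by
  obtain ⟨r₀, -, hu⟩ := hrep (r * ι h)
  obtain rfl : r = r' := (hu r ⟨hr, h, rfl⟩).trans (hu r' ⟨hr', h', e⟩).symm
  exact ⟨rfl, hι (mul_left_cancel e)⟩

theorem card_mul_card_eq_card (hι : Injective ι)
    (hrep : ∀ g : G, ∃! r, r ∈ I ∧ ∃ h : H, g = r * ι h) :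
    Nat.card H * Nat.card I = Nat.card G := by
  rw [← Nat.card_prod]
  refine Nat.card_congr (Equiv.ofBijective (fun x : H × I => (x.2 : G) * ι x.1) ⟨?_, ?_⟩)
  · rintro ⟨h, r⟩ ⟨h', r'⟩ e
    obtain ⟨hr, hh⟩ := eq_and_eq_of_mul_eq_mul hι hrep r.2 r'.2 e
    exact Prod.ext hh (Subtype.ext hr)
  · intro g
    obtain ⟨r, ⟨hr, h, rfl⟩, -⟩ := hrep g
    exact ⟨(h, ⟨r, hr⟩), rfl⟩

theorem Set.nonempty_of_existsUnique_mul (hrep : ∀ g : G, ∃! r, r ∈ I ∧ ∃ h : H, g = r * ι h) :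
    I.Nonempty :=
  let ⟨r, ⟨hr, _⟩, _⟩ := hrep 1
  ⟨r, hr⟩

end CosetDecomposition

theorem injective_of_map_apply_eq_mul {G U : Type*} [Group G] [Nonempty U]
    {j : G → Equiv.Perm U} (f : U → G) (hf : ∀ g u, f (j g u) = f u * g) : Injective j := by
  intro g g' e
  obtain ⟨u⟩ := ‹Nonempty U›
  have h := hf g u
  rw [e, hf g' u] at h
  exact (mul_left_cancel h).symm

theorem rep_apply_eq_and_base_apply_eq {G H U : Type*} [Group G] [Group H] {ι : H →* G}
    {I : Set G} (hι : Injective ι) (hrep : ∀ g : G, ∃! r, r ∈ I ∧ ∃ h : H, g = r * ι h)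
    {j : G → Equiv.Perm U} {rep : U → G} {base : U → H} (hrepI : ∀ u, rep u ∈ I)
    (hj : ∀ g u, rep (j g u) * ι (base (j g u)) = rep u * ι (base u) * g) (k : H) (u : U) :
    rep (j (ι k) u) = rep u ∧ base (j (ι k) u) = base u * k :=
  eq_and_eq_of_mul_eq_mul hι hrep (hrepI _) (hrepI u) (by rw [hj, map_mul, mul_assoc])

theorem Nat.card_subtype_snd_mem_prod {H G₁ G₂ : Type*} (I₁ : Set G₁) (I₂ : Set G₂) :
    Nat.card {p : H × G₁ × G₂ // p.2.1 ∈ I₁ ∧ p.2.2 ∈ I₂}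
      = Nat.card H * (Nat.card I₁ * Nat.card I₂) := by
  rw [← Nat.card_prod, ← Nat.card_prod]
  exact Nat.card_congr
    { toFun := fun p => (p.1.1, ⟨p.1.2.1, p.2.1⟩, ⟨p.1.2.2, p.2.2⟩)
      invFun := fun x => ⟨(x.1, x.2.1, x.2.2), x.2.1.2, x.2.2.2⟩ }

theorem stmt6_general {G₀ G₁ G₂ : Type u} [Group G₀] [Group G₁] [Group G₂]
    [Finite G₀] [Finite G₁] [Finite G₂]
    (ι₁ : G₀ →* G₁) (ι₂ : G₀ →* G₂)
    (hι₁ : Function.Injective ι₁) (hι₂ : Function.Injective ι₂)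
    (I₁ : Set G₁) (I₂ : Set G₂)
    (hrep₁ : ∀ g : G₁, ∃! r, r ∈ I₁ ∧ ∃ h : G₀, g = r * ι₁ h)
    (hrep₂ : ∀ g : G₂, ∃! r, r ∈ I₂ ∧ ∃ h : G₀, g = r * ι₂ h)
    (j₁ : G₁ → Equiv.Perm {p : G₀ × G₁ × G₂ // p.2.1 ∈ I₁ ∧ p.2.2 ∈ I₂})
    (j₂ : G₂ → Equiv.Perm {p : G₀ × G₁ × G₂ // p.2.1 ∈ I₁ ∧ p.2.2 ∈ I₂})
    (hj₁ : ∀ (g : G₁) (u : {p : G₀ × G₁ × G₂ // p.2.1 ∈ I₁ ∧ p.2.2 ∈ I₂}),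
        ((j₁ g u).1.2.2 = u.1.2.2) ∧
        ((j₁ g u).1.2.1 * ι₁ ((j₁ g u).1.1) = u.1.2.1 * ι₁ u.1.1 * g))
    (hj₂ : ∀ (g : G₂) (u : {p : G₀ × G₁ × G₂ // p.2.1 ∈ I₁ ∧ p.2.2 ∈ I₂}),
        ((j₂ g u).1.2.1 = u.1.2.1) ∧
        ((j₂ g u).1.2.2 * ι₂ ((j₂ g u).1.1) = u.1.2.2 * ι₂ u.1.1 * g)) :
    Nat.card ↥(Subgroup.closure (Set.range j₁ ∪ Set.range j₂))
        ≤ Nat.factorial (Nat.card G₁ * Nat.card G₂ / Nat.card G₀) ∧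
    Function.Injective j₁ ∧ Function.Injective j₂ ∧
    (∀ g : G₀, j₁ (ι₁ g) = j₂ (ι₂ g)) := by
  have hU : Nat.card {p : G₀ × G₁ × G₂ // p.2.1 ∈ I₁ ∧ p.2.2 ∈ I₂}
      = Nat.card G₁ * Nat.card G₂ / Nat.card G₀ := by
    rw [Nat.card_subtype_snd_mem_prod, ← card_mul_card_eq_card hι₁ hrep₁,
      ← card_mul_card_eq_card hι₂ hrep₂]
    exact (Nat.div_eq_of_eq_mul_left Nat.card_pos (by ring)).symm
  obtain ⟨r₁, hr₁⟩ := Set.nonempty_of_existsUnique_mul hrep₁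
  obtain ⟨r₂, hr₂⟩ := Set.nonempty_of_existsUnique_mul hrep₂
  have : Nonempty {p : G₀ × G₁ × G₂ // p.2.1 ∈ I₁ ∧ p.2.2 ∈ I₂} := ⟨⟨(1, r₁, r₂), hr₁, hr₂⟩⟩
  have hfix₁ := rep_apply_eq_and_base_apply_eq hι₁ hrep₁ (base := fun u => u.1.1) (fun u => u.2.1) (fun g u => (hj₁ g u).2)
  have hfix₂ := rep_apply_eq_and_base_apply_eq hι₂ hrep₂ (base := fun u => u.1.1) (fun u => u.2.2) (fun g u => (hj₂ g u).2)
  refine ⟨?_, injective_of_map_apply_eq_mul (fun u => u.1.2.1 * ι₁ u.1.1) fun g u => (hj₁ g u).2,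
    injective_of_map_apply_eq_mul (fun u => u.1.2.2 * ι₂ u.1.1) fun g u => (hj₂ g u).2,
    fun k => ?_⟩
  · rw [← hU, ← Nat.card_perm]
    exact Subgroup.card_le_card_group _
  · ext u : 2
    exact Prod.ext ((hfix₁ k u).2.trans (hfix₂ k u).2.symm) <|
      Prod.ext ((hfix₁ k u).1.trans (hj₂ _ u).1.symm) ((hj₁ _ u).1.trans (hfix₂ k u).1.symm)

/-- If `G₀ ⊆ G₁`, `G₀ ⊆ G₂` are finite groups then in the coset-triple
construction the subgroup `G_x` of `Perm U` generated by the images of `G₁`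
and `G₂` has at most `((|G₁|·|G₂|/|G₀|)!)` elements; in particular it is a
finite group into which `G₁` and `G₂` embed with the embeddings agreeing
on `G₀`. -/
theorem stmt6 {G₀ G₁ G₂ : Type u} [Group G₀] [Group G₁] [Group G₂]
    [Finite G₀] [Finite G₁] [Finite G₂]
    (ι₁ : G₀ →* G₁) (ι₂ : G₀ →* G₂)
    (hι₁ : Function.Injective ι₁) (hι₂ : Function.Injective ι₂)
    (I₁ : Set G₁) (I₂ : Set G₂)
    (hone₁ : (1 : G₁) ∈ I₁) (hone₂ : (1 : G₂) ∈ I₂)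
    (hrep₁ : ∀ g : G₁, ∃! r, r ∈ I₁ ∧ ∃ h : G₀, g = r * ι₁ h)
    (hrep₂ : ∀ g : G₂, ∃! r, r ∈ I₂ ∧ ∃ h : G₀, g = r * ι₂ h)
    (j₁ : G₁ → Equiv.Perm {p : G₀ × G₁ × G₂ // p.2.1 ∈ I₁ ∧ p.2.2 ∈ I₂})
    (j₂ : G₂ → Equiv.Perm {p : G₀ × G₁ × G₂ // p.2.1 ∈ I₁ ∧ p.2.2 ∈ I₂})
    (hj₁ : ∀ (g : G₁) (u : {p : G₀ × G₁ × G₂ // p.2.1 ∈ I₁ ∧ p.2.2 ∈ I₂}),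
        ((j₁ g u).1.2.2 = u.1.2.2) ∧
        ((j₁ g u).1.2.1 * ι₁ ((j₁ g u).1.1) = u.1.2.1 * ι₁ u.1.1 * g))
    (hj₂ : ∀ (g : G₂) (u : {p : G₀ × G₁ × G₂ // p.2.1 ∈ I₁ ∧ p.2.2 ∈ I₂}),
        ((j₂ g u).1.2.1 = u.1.2.1) ∧
        ((j₂ g u).1.2.2 * ι₂ ((j₂ g u).1.1) = u.1.2.2 * ι₂ u.1.1 * g)) :
    Nat.card ↥(Subgroup.closure (Set.range j₁ ∪ Set.range j₂))
        ≤ Nat.factorial (Nat.card G₁ * Nat.card G₂ / Nat.card G₀) ∧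
    Function.Injective j₁ ∧ Function.Injective j₂ ∧
    (∀ g : G₀, j₁ (ι₁ g) = j₂ (ι₂ g)) :=
  stmt6_general ι₁ ι₂ hι₁ hι₂ I₁ I₂ hrep₁ hrep₂ j₁ j₂ hj₁ hj₂
end

section
/- The class of finite groups has the amalgamation property: if G₀ ⊆ G₁ and G₀ ⊆ G₂ are finite groups, then there exist a finite group G₃ and embeddings f₁ : G₁ → G₃, f₂ : G₂ → G₃ with f₁ and f₂ agreeing on G₀. Moreover G₃ can be chosen so that f₁(G₁) ∩ f₂(G₂) = f₁(G₀) (disjoint amalgamation). -/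
/-!
Choose left transversals `S₁`, `S₂` of `G₀` in `G₁`, `G₂` through `1`, so that `Gᵢ ≃ Sᵢ × G₀`
with right multiplication by `G₀` acting on the second factor only. Then `G₁` acts faithfully on
`X = S₁ × G₀ × S₂ ≃ G₁ × S₂` and `G₂` on `X ≃ G₂ × S₁`, both by right multiplication, and on `G₀`
both actions are right multiplication on the middle factor; `Perm X` is the amalgam. Since `G₂`
preserves the `S₁`-coordinate, an element of `G₁` acting like an element of `G₂` keeps the coset
of `1`, hence lies in `G₀`.
-/

universe u

open Function Equiv

section RightMulPerm

variable {G X Y : Type*} [Group G]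

def rightMulPermHom (E : G × Y ≃ X) : G →* Perm X where
  toFun g := E.permCongr ((Equiv.mulRight g⁻¹).prodCongr (Equiv.refl Y))
  map_one' := by ext; simp
  map_mul' g g' := by ext; simp [Equiv.permCongr_apply, Prod.map, mul_assoc]

@[simp]
lemma rightMulPermHom_apply_apply (E : G × Y ≃ X) (g x : G) (y : Y) :
    rightMulPermHom E g (E (x, y)) = E (x * g⁻¹, y) := by
  simp [rightMulPermHom, Equiv.permCongr_apply]

lemma rightMulPermHom_injective [Nonempty Y] (E : G × Y ≃ X) :
    Injective (rightMulPermHom E) := by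
  intro g g' hgg'
  obtain ⟨y⟩ := ‹Nonempty Y›
  simpa using congr($hgg' (E (1, y)))

end RightMulPerm

section RangeTransversal

variable {G₀ G : Type*} [Group G₀] [Group G] {ι : G₀ →* G}

noncomputable def rangeTransversal (ι : G₀ →* G) : Set G :=
  (Subgroup.exists_isComplement_left ι.range 1).choose

lemma isComplement_rangeTransversal (ι : G₀ →* G) :
    Subgroup.IsComplement (rangeTransversal ι) ι.range :=
  (Subgroup.exists_isComplement_left ι.range 1).choose_spec.1

lemma one_mem_rangeTransversal (ι : G₀ →* G) : (1 : G) ∈ rangeTransversal ι :=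
  (Subgroup.exists_isComplement_left ι.range 1).choose_spec.2

instance (ι : G₀ →* G) : Nonempty (rangeTransversal ι) :=
  ⟨⟨1, one_mem_rangeTransversal ι⟩⟩

noncomputable def equivTransversalProd (hι : Injective ι) : G ≃ rangeTransversal ι × G₀ :=
  (isComplement_rangeTransversal ι).equiv.trans
    ((Equiv.refl _).prodCongr (MonoidHom.ofInjective hι).symm.toEquiv)

variable (hι : Injective ι)

lemma equivTransversalProd_fst (g : G) :
    (equivTransversalProd hι g).1 = ((isComplement_rangeTransversal ι).equiv g).1 := rfl

lemma equivTransversalProd_mul (g : G) (a : G₀) :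
    equivTransversalProd hι (g * ι a) =
      ((equivTransversalProd hι g).1, (equivTransversalProd hι g).2 * a) := by
  have hmul :=
    (isComplement_rangeTransversal ι).equiv_mul_right_of_mem (ι.mem_range.2 ⟨a, rfl⟩) (g := g)
  have hsymm : (MonoidHom.ofInjective hι).symm ⟨ι a, ι.mem_range.2 ⟨a, rfl⟩⟩ = a :=
    (MulEquiv.symm_apply_eq _).2 (Subtype.ext (MonoidHom.ofInjective_apply hι).symm)
  rw [equivTransversalProd, trans_apply, trans_apply, hmul, prodCongr_apply]
  exact Prod.ext rfl ((map_mul (MonoidHom.ofInjective hι).symm _ _).trans (congrArg _ hsymm))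

lemma equivTransversalProd_fst_eq_fst_one_iff (g : G) :
    (equivTransversalProd hι g).1 = (equivTransversalProd hι 1).1 ↔ g ∈ ι.range := by
  have hS := isComplement_rangeTransversal ι
  rw [equivTransversalProd_fst, equivTransversalProd_fst,
    hS.equiv_fst_eq_self_of_mem_of_one_mem ι.range.one_mem (one_mem_rangeTransversal ι),
    Subtype.ext_iff, hS.coe_equiv_fst_eq_one_iff_mem (one_mem_rangeTransversal ι),
    SetLike.mem_coe]

end RangeTransversal

section Amalgam

variable {G₀ G₁ G₂ : Type*} [Group G₀] [Group G₁] [Group G₂] {ι₁ : G₀ →* G₁} {ι₂ : G₀ →* G₂}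

abbrev AmalgamSpace (ι₁ : G₀ →* G₁) (ι₂ : G₀ →* G₂) : Type _ :=
  rangeTransversal ι₁ × G₀ × rangeTransversal ι₂

noncomputable def amalgamEquivLeft (h₁ : Injective ι₁) (ι₂ : G₀ →* G₂) :
    G₁ × rangeTransversal ι₂ ≃ AmalgamSpace ι₁ ι₂ :=
  ((equivTransversalProd h₁).prodCongr (Equiv.refl _)).trans (prodAssoc _ _ _)

noncomputable def amalgamEquivRight (ι₁ : G₀ →* G₁) (h₂ : Injective ι₂) :
    G₂ × rangeTransversal ι₁ ≃ AmalgamSpace ι₁ ι₂ :=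
  (prodComm _ _).trans ((Equiv.refl _).prodCongr ((equivTransversalProd h₂).trans (prodComm _ _)))

noncomputable def amalgamLeft (h₁ : Injective ι₁) (ι₂ : G₀ →* G₂) :
    G₁ →* Perm (AmalgamSpace ι₁ ι₂) :=
  rightMulPermHom (amalgamEquivLeft h₁ ι₂)

noncomputable def amalgamRight (ι₁ : G₀ →* G₁) (h₂ : Injective ι₂) :
    G₂ →* Perm (AmalgamSpace ι₁ ι₂) :=
  rightMulPermHom (amalgamEquivRight ι₁ h₂)

lemma amalgamLeft_apply_apply (h₁ : Injective ι₁) (ι₂ : G₀ →* G₂) (a : G₀)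
    (p : AmalgamSpace ι₁ ι₂) :
    amalgamLeft h₁ ι₂ (ι₁ a) p = (p.1, p.2.1 * a⁻¹, p.2.2) := by
  obtain ⟨⟨x, s⟩, rfl⟩ := (amalgamEquivLeft h₁ ι₂).surjective p
  rw [amalgamLeft, rightMulPermHom_apply_apply, ← map_inv ι₁]
  simp [amalgamEquivLeft, equivTransversalProd_mul, -map_inv]

lemma amalgamRight_apply_apply (ι₁ : G₀ →* G₁) (h₂ : Injective ι₂) (a : G₀)
    (p : AmalgamSpace ι₁ ι₂) :
    amalgamRight ι₁ h₂ (ι₂ a) p = (p.1, p.2.1 * a⁻¹, p.2.2) := by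
  obtain ⟨⟨y, s⟩, rfl⟩ := (amalgamEquivRight ι₁ h₂).surjective p
  rw [amalgamRight, rightMulPermHom_apply_apply, ← map_inv ι₂]
  simp [amalgamEquivRight, equivTransversalProd_mul, -map_inv]

lemma amalgamLeft_apply_eq_amalgamRight_apply (h₁ : Injective ι₁) (h₂ : Injective ι₂)
    (a : G₀) : amalgamLeft h₁ ι₂ (ι₁ a) = amalgamRight ι₁ h₂ (ι₂ a) := by
  ext p : 1
  rw [amalgamLeft_apply_apply, amalgamRight_apply_apply]

lemma amalgamRight_apply_fst (ι₁ : G₀ →* G₁) (h₂ : Injective ι₂) (g : G₂)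
    (p : AmalgamSpace ι₁ ι₂) :
    (amalgamRight ι₁ h₂ g p).1 = p.1 := by
  obtain ⟨⟨y, s⟩, rfl⟩ := (amalgamEquivRight ι₁ h₂).surjective p
  rw [amalgamRight, rightMulPermHom_apply_apply]
  rfl

lemma mem_range_of_amalgamLeft_eq_amalgamRight (h₁ : Injective ι₁) (h₂ : Injective ι₂)
    {g₁ : G₁} {g₂ : G₂} (h : amalgamLeft h₁ ι₂ g₁ = amalgamRight ι₁ h₂ g₂) : g₁ ∈ ι₁.range := by
  have hfst := amalgamRight_apply_fst ι₁ h₂ g₂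
    (amalgamEquivLeft h₁ ι₂ (1, ⟨1, one_mem_rangeTransversal ι₂⟩))
  rw [← h, amalgamLeft, rightMulPermHom_apply_apply, one_mul] at hfst
  exact inv_mem_iff.1 ((equivTransversalProd_fst_eq_fst_one_iff h₁ _).1 hfst)

end Amalgam

lemma Set.range_inter_range_eq_image_range {α β γ δ : Type*} {f₁ : β → δ} {f₂ : γ → δ}
    {ι₁ : α → β} {ι₂ : α → γ} (hcomm : ∀ a, f₁ (ι₁ a) = f₂ (ι₂ a))
    (hmem : ∀ b c, f₁ b = f₂ c → b ∈ Set.range ι₁) :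
    Set.range f₁ ∩ Set.range f₂ = f₁ '' Set.range ι₁ := by
  ext x
  constructor
  · rintro ⟨⟨b, rfl⟩, c, hc⟩
    exact ⟨b, hmem b c hc.symm, rfl⟩
  · rintro ⟨-, ⟨a, rfl⟩, rfl⟩
    exact ⟨⟨_, rfl⟩, ι₂ a, (hcomm a).symm⟩

theorem stmt7_general {G₀ G₁ G₂ : Type u} [Group G₀] [Group G₁] [Group G₂]
    [Finite G₁] [Finite G₂]
    (ι₁ : G₀ →* G₁) (ι₂ : G₀ →* G₂)
    (h₁ : Function.Injective ι₁) (h₂ : Function.Injective ι₂) :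
    ∃ (G₃ : GrpCat.{u}) (f₁ : G₁ →* G₃) (f₂ : G₂ →* G₃),
      Finite G₃ ∧ Function.Injective f₁ ∧ Function.Injective f₂ ∧
      (∀ g : G₀, f₁ (ι₁ g) = f₂ (ι₂ g)) ∧
      Set.range f₁ ∩ Set.range f₂ = f₁ '' Set.range ι₁ := by
  have : Finite (AmalgamSpace ι₁ ι₂) := .of_equiv _ (amalgamEquivLeft h₁ ι₂)
  refine ⟨GrpCat.of (Perm (AmalgamSpace ι₁ ι₂)), amalgamLeft h₁ ι₂,
    amalgamRight ι₁ h₂, inferInstanceAs (Finite (Perm _)), rightMulPermHom_injective _,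
    rightMulPermHom_injective _, amalgamLeft_apply_eq_amalgamRight_apply h₁ h₂, ?_⟩
  exact Set.range_inter_range_eq_image_range (amalgamLeft_apply_eq_amalgamRight_apply h₁ h₂)
    fun _ _ h ↦ mem_range_of_amalgamLeft_eq_amalgamRight h₁ h₂ h

/-- The class of finite groups has the disjoint amalgamation property: two finite
groups `G₁`, `G₂` with a common finite subgroup `G₀` embed compatibly into a
finite group `G₃`, with the images of `G₁` and `G₂` meeting exactly in the image
of `G₀`. -/
theorem stmt7 {G₀ G₁ G₂ : Type u} [Group G₀] [Group G₁] [Group G₂]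
    [Finite G₀] [Finite G₁] [Finite G₂]
    (ι₁ : G₀ →* G₁) (ι₂ : G₀ →* G₂)
    (h₁ : Function.Injective ι₁) (h₂ : Function.Injective ι₂) :
    ∃ (G₃ : GrpCat.{u}) (f₁ : G₁ →* G₃) (f₂ : G₂ →* G₃),
      Finite G₃ ∧ Function.Injective f₁ ∧ Function.Injective f₂ ∧
      (∀ g : G₀, f₁ (ι₁ g) = f₂ (ι₂ g)) ∧
      Set.range f₁ ∩ Set.range f₂ = f₁ '' Set.range ι₁ :=
  stmt7_general ι₁ ι₂ h₁ h₂
end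

section
/- Preservation of commutation in the coset-triple amalgam: assume G₀ ⊆ G₁, G₀ ⊆ G₂ with coset representative sets I₁, I₂ as in the coset-triple construction; assume H₁ ⊆ G₁ is a subgroup with H₀ = H₁ ∩ G₀, such that H₁ commutes elementwise with G₀, H₁ is the union of the cosets b·H₀ for b ∈ I₁ ∩ H₁, and I₁ is closed under right multiplication by elements of I₁ ∩ H₁ (g ∈ I₁, b ∈ I₁ ∩ H₁ ⟹ gb ∈ I₁); assume H₂ ⊆ G₂ commutes elementwise with H₀ and H₂ is the union of the cosets b·H₀ for b ∈ I₂ ∩ H₂. Then the images j₁(H₁) and j₂(H₂) commute elementwise in the permutation group Perm(U) of the coset-triple construction. -/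
/-!
Write `a ∈ H₁` as `a = b₁ · h₀` with `b₁ ∈ I₁ ∩ H₁` and `h₀ ∈ H₀`. Since `a` commutes with `G₀`
and `I₁ b₁ ⊆ I₁`, the permutation `j₁(a)` is the explicit map `(g₀, g₁, g₂) ↦ (h₀ g₀, g₁ b₁, g₂)`.
The element `h₀` is central in `G₀` and commutes with every `b ∈ H₂`, so `j₂(b)`, which fixes
the middle coordinate, commutes with left multiplication by `h₀` on the first coordinate.
-/

universe u

theorem transversal_mul_inj {G₀ G : Type*} [Group G₀] [Group G] {ι : G₀ →* G}
    (hι : Function.Injective ι) {I : Set G}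
    (hrep : ∀ g : G, ∃! r, r ∈ I ∧ ∃ h : G₀, g = r * ι h)
    {r₁ r₂ : G} (hr₁ : r₁ ∈ I) (hr₂ : r₂ ∈ I) {h₁ h₂ : G₀}
    (heq : r₁ * ι h₁ = r₂ * ι h₂) : r₁ = r₂ ∧ h₁ = h₂ := by
  obtain ⟨r, -, hr⟩ := hrep (r₁ * ι h₁)
  have hrr : r₁ = r₂ := (hr r₁ ⟨hr₁, h₁, rfl⟩).trans (hr r₂ ⟨hr₂, h₂, heq⟩).symm
  subst hrr
  exact ⟨rfl, hι (mul_left_cancel heq)⟩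

abbrev CosetTriple (G₀ : Type*) {G₁ G₂ : Type*} (I₁ : Set G₁) (I₂ : Set G₂) :=
  {p : G₀ × G₁ × G₂ // p.2.1 ∈ I₁ ∧ p.2.2 ∈ I₂}

theorem CosetTriple.val_apply_eq_of_eq_mul {G₀ G₁ G₂ : Type*} [Group G₀] [Group G₁]
    {ι₁ : G₀ →* G₁} {I₁ : Set G₁} {I₂ : Set G₂} (hι₁ : Function.Injective ι₁)
    (hrep₁ : ∀ g : G₁, ∃! r, r ∈ I₁ ∧ ∃ h : G₀, g = r * ι₁ h)
    {f : CosetTriple G₀ I₁ I₂ → CosetTriple G₀ I₁ I₂} {a b₁ : G₁} {h₀ : G₀}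
    (hf : ∀ u, (f u).1.2.2 = u.1.2.2 ∧ (f u).1.2.1 * ι₁ (f u).1.1 = u.1.2.1 * ι₁ u.1.1 * a)
    (ha : ∀ g : G₀, Commute a (ι₁ g)) (hab : a = b₁ * ι₁ h₀)
    (hclosed : ∀ g ∈ I₁, g * b₁ ∈ I₁) (u : CosetTriple G₀ I₁ I₂) :
    (f u).1 = (h₀ * u.1.1, u.1.2.1 * b₁, u.1.2.2) := by
  have hmul : u.1.2.1 * ι₁ u.1.1 * a = u.1.2.1 * b₁ * ι₁ (h₀ * u.1.1) := by
    rw [mul_assoc, ← (ha u.1.1).eq, hab, map_mul]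
    group
  obtain ⟨hr, hh⟩ := transversal_mul_inj hι₁ hrep₁ (f u).2.1 (hclosed _ u.2.1)
    ((hf u).2.trans hmul)
  exact Prod.ext hh (Prod.ext hr (hf u).1)

theorem CosetTriple.apply_of_fst_eq_mul {G₀ G₁ G₂ : Type*} [Group G₀] [Group G₂]
    {ι₂ : G₀ →* G₂} {I₁ : Set G₁} {I₂ : Set G₂} (hι₂ : Function.Injective ι₂)
    (hrep₂ : ∀ g : G₂, ∃! r, r ∈ I₂ ∧ ∃ h : G₀, g = r * ι₂ h)
    {f : CosetTriple G₀ I₁ I₂ → CosetTriple G₀ I₁ I₂} {b : G₂} {h₀ : G₀}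
    (hf : ∀ u, (f u).1.2.2 * ι₂ (f u).1.1 = u.1.2.2 * ι₂ u.1.1 * b)
    (hcentral : ∀ g : G₀, Commute h₀ g) (hb : Commute b (ι₂ h₀))
    {u w : CosetTriple G₀ I₁ I₂} (hw₀ : w.1.1 = h₀ * u.1.1) (hw₂ : w.1.2.2 = u.1.2.2) :
    (f w).1.1 = h₀ * (f u).1.1 ∧ (f w).1.2.2 = (f u).1.2.2 := by
  have hmul : w.1.2.2 * ι₂ w.1.1 * b = (f u).1.2.2 * ι₂ (h₀ * (f u).1.1) := by
    calc w.1.2.2 * ι₂ w.1.1 * b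
        = u.1.2.2 * ι₂ u.1.1 * b * ι₂ h₀ := by
          rw [hw₀, hw₂, (hcentral _).eq, map_mul]; simp only [mul_assoc, hb.eq]
      _ = (f u).1.2.2 * ι₂ (h₀ * (f u).1.1) := by
          rw [← hf u, mul_assoc, ← map_mul, ← (hcentral _).eq]
  obtain ⟨hr, hh⟩ := transversal_mul_inj hι₂ hrep₂ (f w).2.2 (f u).2.2 ((hf w).trans hmul)
  exact ⟨hh, hr⟩

theorem stmt19_general {G₀ G₁ G₂ : Type u} [Group G₀] [Group G₁] [Group G₂]
    (ι₁ : G₀ →* G₁) (ι₂ : G₀ →* G₂)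
    (hι₁ : Function.Injective ι₁) (hι₂ : Function.Injective ι₂)
    (I₁ : Set G₁) (I₂ : Set G₂)
    (hrep₁ : ∀ g : G₁, ∃! r, r ∈ I₁ ∧ ∃ h : G₀, g = r * ι₁ h)
    (hrep₂ : ∀ g : G₂, ∃! r, r ∈ I₂ ∧ ∃ h : G₀, g = r * ι₂ h)
    (j₁ : G₁ → Equiv.Perm {p : G₀ × G₁ × G₂ // p.2.1 ∈ I₁ ∧ p.2.2 ∈ I₂})
    (j₂ : G₂ → Equiv.Perm {p : G₀ × G₁ × G₂ // p.2.1 ∈ I₁ ∧ p.2.2 ∈ I₂})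
    (hj₁ : ∀ (g : G₁) (u : {p : G₀ × G₁ × G₂ // p.2.1 ∈ I₁ ∧ p.2.2 ∈ I₂}),
        ((j₁ g u).1.2.2 = u.1.2.2) ∧
        ((j₁ g u).1.2.1 * ι₁ ((j₁ g u).1.1) = u.1.2.1 * ι₁ u.1.1 * g))
    (hj₂ : ∀ (g : G₂) (u : {p : G₀ × G₁ × G₂ // p.2.1 ∈ I₁ ∧ p.2.2 ∈ I₂}),
        ((j₂ g u).1.2.1 = u.1.2.1) ∧
        ((j₂ g u).1.2.2 * ι₂ ((j₂ g u).1.1) = u.1.2.2 * ι₂ u.1.1 * g))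
    (H₁ : Subgroup G₁) (H₂ : Subgroup G₂)
    -- `H₁` commutes elementwise with `G₀`
    (hcomm₁ : ∀ h ∈ H₁, ∀ g : G₀, Commute h (ι₁ g))
    -- `H₁ = ⋃ {b·H₀ : b ∈ I₁ ∩ H₁}` where `H₀ = H₁ ∩ G₀`
    (hcover₁ : ∀ h ∈ H₁, ∃ b, b ∈ I₁ ∧ b ∈ H₁ ∧
        ∃ g : G₀, ι₁ g ∈ H₁ ∧ h = b * ι₁ g)
    -- `I₁` is closed under right multiplication by elements of `I₁ ∩ H₁`
    (hclosed : ∀ g ∈ I₁, ∀ b, b ∈ I₁ → b ∈ H₁ → g * b ∈ I₁)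
    -- `H₂` commutes elementwise with `H₀`
    (hcomm₂ : ∀ h ∈ H₂, ∀ g : G₀, ι₁ g ∈ H₁ → Commute h (ι₂ g)) :
    ∀ a ∈ H₁, ∀ b ∈ H₂, Commute (j₁ a) (j₂ b) := by
  intro a ha b hb
  obtain ⟨b₁, hb₁I, hb₁H, h₀, hh₀, hab⟩ := hcover₁ a ha
  have hj₁a := CosetTriple.val_apply_eq_of_eq_mul hι₁ hrep₁ (hj₁ a) (hcomm₁ a ha) hab
    (fun g hg ↦ hclosed g hg b₁ hb₁I hb₁H)
  have hcentral (g : G₀) : Commute h₀ g := (hcomm₁ _ hh₀ g).of_map hι₁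
  refine Equiv.ext fun u ↦ Subtype.ext ?_
  obtain ⟨hx₀, hx₂⟩ := CosetTriple.apply_of_fst_eq_mul hι₂ hrep₂ (fun v ↦ (hj₂ b v).2)
    hcentral (hcomm₂ b hb h₀ hh₀) (congrArg (·.1) (hj₁a u)) (congrArg (·.2.2) (hj₁a u))
  change (j₁ a (j₂ b u)).1 = (j₂ b (j₁ a u)).1
  rw [hj₁a, Prod.ext_iff, Prod.ext_iff, (hj₂ b _).1, (hj₂ b _).1, hj₁a, hx₀, hx₂]
  exact ⟨rfl, rfl, rfl⟩

/-- Preservation of commutation in the coset-triple amalgam: if `H₁ ⊆ G₁`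
commutes elementwise with `G₀` (with `H₀ = H₁ ∩ G₀`), `H₁` is the union of the
cosets `b·H₀` for `b ∈ I₁ ∩ H₁`, `I₁` is closed under right multiplication by
elements of `I₁ ∩ H₁`, and `H₂ ⊆ G₂` commutes elementwise with `H₀` and is the
union of the cosets `b·H₀` for `b ∈ I₂ ∩ H₂`, then the images `j₁(H₁)` and
`j₂(H₂)` commute elementwise in `Perm U`. -/
theorem stmt19 {G₀ G₁ G₂ : Type u} [Group G₀] [Group G₁] [Group G₂]
    (ι₁ : G₀ →* G₁) (ι₂ : G₀ →* G₂)
    (hι₁ : Function.Injective ι₁) (hι₂ : Function.Injective ι₂)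
    (I₁ : Set G₁) (I₂ : Set G₂)
    (hone₁ : (1 : G₁) ∈ I₁) (hone₂ : (1 : G₂) ∈ I₂)
    (hrep₁ : ∀ g : G₁, ∃! r, r ∈ I₁ ∧ ∃ h : G₀, g = r * ι₁ h)
    (hrep₂ : ∀ g : G₂, ∃! r, r ∈ I₂ ∧ ∃ h : G₀, g = r * ι₂ h)
    (j₁ : G₁ → Equiv.Perm {p : G₀ × G₁ × G₂ // p.2.1 ∈ I₁ ∧ p.2.2 ∈ I₂})
    (j₂ : G₂ → Equiv.Perm {p : G₀ × G₁ × G₂ // p.2.1 ∈ I₁ ∧ p.2.2 ∈ I₂})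
    (hj₁ : ∀ (g : G₁) (u : {p : G₀ × G₁ × G₂ // p.2.1 ∈ I₁ ∧ p.2.2 ∈ I₂}),
        ((j₁ g u).1.2.2 = u.1.2.2) ∧
        ((j₁ g u).1.2.1 * ι₁ ((j₁ g u).1.1) = u.1.2.1 * ι₁ u.1.1 * g))
    (hj₂ : ∀ (g : G₂) (u : {p : G₀ × G₁ × G₂ // p.2.1 ∈ I₁ ∧ p.2.2 ∈ I₂}),
        ((j₂ g u).1.2.1 = u.1.2.1) ∧
        ((j₂ g u).1.2.2 * ι₂ ((j₂ g u).1.1) = u.1.2.2 * ι₂ u.1.1 * g))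
    (H₁ : Subgroup G₁) (H₂ : Subgroup G₂)
    -- `H₁` commutes elementwise with `G₀`
    (hcomm₁ : ∀ h ∈ H₁, ∀ g : G₀, Commute h (ι₁ g))
    -- `H₁ = ⋃ {b·H₀ : b ∈ I₁ ∩ H₁}` where `H₀ = H₁ ∩ G₀`
    (hcover₁ : ∀ h ∈ H₁, ∃ b, b ∈ I₁ ∧ b ∈ H₁ ∧
        ∃ g : G₀, ι₁ g ∈ H₁ ∧ h = b * ι₁ g)
    -- `I₁` is closed under right multiplication by elements of `I₁ ∩ H₁`
    (hclosed : ∀ g ∈ I₁, ∀ b, b ∈ I₁ → b ∈ H₁ → g * b ∈ I₁)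
    -- `H₂` commutes elementwise with `H₀`
    (hcomm₂ : ∀ h ∈ H₂, ∀ g : G₀, ι₁ g ∈ H₁ → Commute h (ι₂ g))
    -- `H₂ = ⋃ {b·H₀ : b ∈ I₂ ∩ H₂}`
    (hcover₂ : ∀ h ∈ H₂, ∃ b, b ∈ I₂ ∧ b ∈ H₂ ∧
        ∃ g : G₀, ι₁ g ∈ H₁ ∧ h = b * ι₂ g) :
    ∀ a ∈ H₁, ∀ b ∈ H₂, Commute (j₁ a) (j₂ b) :=
  stmt19_general ι₁ ι₂ hι₁ hι₂ I₁ I₂ hrep₁ hrep₂ j₁ j₂ hj₁ hj₂ H₁ H₂ hcomm₁ hcover₁ hclosed hcomm₂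
end
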